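/- The maximum of f(x,y,z) := x + y + z + sqrt((x+y+z)² - 4xz) over the polytope {(x,y,z) ∈ ℝ³ : x,y,z ≥ 0, x + y ≤ 1/4, y + z ≤ 1/4} equals 2/3, attained at (x,y,z) = (1/6, 1/12, 1/6). -/
import Mathlib


open Real

/-- The maximum of `f(x,y,z) = x + y + z + √((x+y+z)² - 4xz)` over the polytope
`{x,y,z ≥ 0, x + y ≤ 1/4, y + z ≤ 1/4}` equals `2/3`, attained at `(1/6, 1/12, 1/6)`. -/
theorem stmt13 :
    (0 ≤ (1 / 6 : ℝ) ∧ 0 ≤ (1 / 12 : ℝ) ∧ 0 ≤ (1 / 6 : ℝ) ∧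
      (1 / 6 : ℝ) + 1 / 12 ≤ 1 / 4 ∧ (1 / 12 : ℝ) + 1 / 6 ≤ 1 / 4) ∧
    ((1 / 6 : ℝ) + 1 / 12 + 1 / 6 +
        Real.sqrt (((1 / 6 : ℝ) + 1 / 12 + 1 / 6) ^ 2 - 4 * (1 / 6) * (1 / 6)) = 2 / 3) ∧
    (∀ x y z : ℝ, 0 ≤ x → 0 ≤ y → 0 ≤ z → x + y ≤ 1 / 4 → y + z ≤ 1 / 4 →
      x + y + z + Real.sqrt ((x + y + z) ^ 2 - 4 * x * z) ≤ 2 / 3) := by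
  refine ⟨⟨by norm_num, by norm_num, by norm_num, by norm_num, by norm_num⟩, ?_, ?_⟩
  · have h : ((1 / 6 : ℝ) + 1 / 12 + 1 / 6) ^ 2 - 4 * (1 / 6) * (1 / 6) = (1/4)^2 := by
      norm_num
    rw [h, Real.sqrt_sq (by norm_num)]
    norm_num
  · intro x y z hx hy hz h1 h2
    have hb : (0:ℝ) ≤ 2/3 - (x + y + z) := by nlinarith
    have hkey : (x + y + z) ^ 2 - 4 * x * z ≤ (2/3 - (x + y + z))^2 := by
      nlinarith [sq_nonneg (x - z), sq_nonneg (x + z - 1/3), mul_nonneg hx hz,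
        mul_nonneg (mul_nonneg hx hy) hz, sq_nonneg (x + y + z - 1/3)]
    have := Real.sqrt_le_sqrt hkey
    rw [Real.sqrt_sq hb] at this
    linarith
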